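/- arXiv:1709.06268 — 2 statements merged into one kernel-verified Lean document; each statement's English description precedes it below -/
import Mathlib

section
/- Let λ > 2. Then for every φ ∈ (0,π) and every t > 0, |f^{(λ)}(φ,t)| ≤ 2^{λ/2} · (λ−1) · (sin φ)^{λ−1} · ( |cot φ| + 2t/3 ) · ( 1 + (|cot φ|^{λ−2}/2^{λ−2}) · t^{λ−2} · e^{(λ−2)t} ) · e^{(λ−1)t}. -/
open Real

/-!
Write `g(φ,t) = A + iB` with `A = cos φ (cosh t − 1)/t` and `B = sin φ sinh t / t`. Both
`g(φ,t)` and `g(φ,0) = i sin φ` lie in the upper half-plane, which is convex and avoids the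
branch cut, so the mean value inequality for `z ↦ z^(λ−1)` bounds `|f|` by
`(λ−1) max(|g(φ,t)|, sin φ)^(λ−2) |g(φ,t) − g(φ,0)| / t`. The first factor is controlled through
`|z| ≤ √2 max(|Re z|, |Im z|)`, the second through `cosh t − 1 ≤ t² eᵗ/2` and
`sinh t − t ≤ t (cosh t − 1)`.
-/

/-- `g(φ,t) = (cos(φ − it) − cos φ)/t` for `t ≠ 0`, with `g(φ,0) = i sin φ`. -/
noncomputable def gfun (φ t : ℝ) : ℂ :=
  if t = 0 then Complex.I * (Real.sin φ : ℂ)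
  else (Complex.cos ((φ : ℂ) - Complex.I * (t : ℂ)) - Complex.cos (φ : ℂ)) / (t : ℂ)

/-- `f^{(λ)}(φ,t) = (g(φ,t)^{λ−1} − g(φ,0)^{λ−1})/t`, complex powers with the
principal branch. -/
noncomputable def ffun (lam φ t : ℝ) : ℂ :=
  (gfun φ t ^ ((lam : ℂ) - 1) - gfun φ 0 ^ ((lam : ℂ) - 1)) / (t : ℂ)

namespace Real

variable {t : ℝ}

theorem sinh_le_mul_cosh (ht : 0 ≤ t) : sinh t ≤ t * cosh t := by
  refine hasSum_le (fun n => ?_) (hasSum_sinh t) ((hasSum_cosh t).mul_left t)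
  rw [pow_succ', mul_div_assoc]
  gcongr
  exact Nat.le_succ _

theorem cosh_le_exp (ht : 0 ≤ t) : cosh t ≤ exp t := by
  rw [cosh_eq]
  linarith [exp_le_exp.2 (show -t ≤ t by linarith)]

theorem sinh_le_mul_exp (ht : 0 ≤ t) : sinh t ≤ t * exp t :=
  (sinh_le_mul_cosh ht).trans (mul_le_mul_of_nonneg_left (cosh_le_exp ht) ht)

theorem cosh_sub_one_le (ht : 0 ≤ t) : cosh t - 1 ≤ t ^ 2 / 2 * exp t := by
  rw [cosh_eq]
  have h1 : -t + 1 ≤ exp (-t) := add_one_le_exp _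
  have h2 : exp (-t) ≤ 1 := exp_le_one_iff.2 (by linarith)
  have h3 : exp (-t) * exp t = 1 := by rw [← exp_add]; simp
  nlinarith [exp_pos t, exp_pos (-t)]

end Real

theorem Complex.norm_rpow_le_two_rpow_half_mul (z : ℂ) {p : ℝ} (hp : 0 ≤ p) :
    ‖z‖ ^ p ≤ 2 ^ (p / 2) * (|z.re| ^ p + |z.im| ^ p) := by
  have hmax : max |z.re| |z.im| ^ p ≤ |z.re| ^ p + |z.im| ^ p := by
    rw [rpow_max (abs_nonneg _) (abs_nonneg _) hp]
    exact max_le_add_of_nonneg (by positivity) (by positivity)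
  calc ‖z‖ ^ p ≤ (√2 * max |z.re| |z.im|) ^ p := by
        gcongr; exact Complex.norm_le_sqrt_two_mul_max z
    _ = 2 ^ (p / 2) * max |z.re| |z.im| ^ p := by
        rw [mul_rpow (by positivity) (by positivity), sqrt_eq_rpow, ← rpow_mul zero_le_two]
        ring_nf
    _ ≤ 2 ^ (p / 2) * (|z.re| ^ p + |z.im| ^ p) := by gcongr

theorem Complex.norm_cpow_sub_cpow_le {z w : ℂ} (hz : 0 < z.im) (hw : 0 < w.im) {c : ℝ}
    (hc : 1 ≤ c) :
    ‖z ^ (c : ℂ) - w ^ (c : ℂ)‖ ≤ c * max ‖z‖ ‖w‖ ^ (c - 1) * ‖z - w‖ := by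
  set M := max ‖z‖ ‖w‖
  let S := {x : ℂ | 0 < x.im} ∩ Metric.closedBall 0 M
  have hS : Convex ℝ S := (convex_halfSpace_im_gt 0).inter (convex_closedBall 0 M)
  have hderiv : ∀ x ∈ S, HasDerivWithinAt (· ^ (c : ℂ)) (c * x ^ ((c : ℂ) - 1)) S x :=
    fun x hx => (Complex.hasStrictDerivAt_cpow_const
      (Complex.mem_slitPlane_iff.2 (Or.inr hx.1.ne'))).hasDerivAt.hasDerivWithinAt
  have hbound : ∀ x ∈ S, ‖(c : ℂ) * x ^ ((c : ℂ) - 1)‖ ≤ c * M ^ (c - 1) := by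
    intro x hx
    have hxM : ‖x‖ ≤ M := by simpa using hx.2
    rw [norm_mul, show (c : ℂ) - 1 = ((c - 1 : ℝ) : ℂ) by push_cast; ring,
      Complex.norm_cpow_real, Complex.norm_real, norm_of_nonneg (by linarith)]
    gcongr
  exact hS.norm_image_sub_le_of_norm_hasDerivWithin_le hderiv hbound
    ⟨hw, by simp [M]⟩ ⟨hz, by simp [M]⟩

theorem gfun_zero (φ : ℝ) : gfun φ 0 = Complex.I * sin φ := if_pos rfl

theorem gfun_of_ne_zero (φ : ℝ) {t : ℝ} (ht : t ≠ 0) :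
    gfun φ t = ↑(cos φ * (cosh t - 1) / t) + ↑(sin φ * sinh t / t) * Complex.I := by
  have harg : (φ : ℂ) - Complex.I * t = φ + ↑(-t) * Complex.I := by push_cast; ring
  rw [gfun, if_neg ht, harg, Complex.cos_add_mul_I, ← Complex.ofReal_cos, ← Complex.ofReal_sin,
    ← Complex.ofReal_cosh, ← Complex.ofReal_sinh, cosh_neg, sinh_neg]
  have ht' : (t : ℂ) ≠ 0 := Complex.ofReal_ne_zero.2 ht
  push_cast
  field_simp
  ring

section Estimates

variable (φ : ℝ) {t : ℝ}

theorem gfun_re (ht : t ≠ 0) : (gfun φ t).re = cos φ * (cosh t - 1) / t := by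
  rw [gfun_of_ne_zero φ ht, Complex.add_re, Complex.ofReal_re, Complex.re_ofReal_mul,
    Complex.I_re, mul_zero, add_zero]

theorem gfun_im (ht : t ≠ 0) : (gfun φ t).im = sin φ * sinh t / t := by
  rw [gfun_of_ne_zero φ ht, Complex.add_im, Complex.ofReal_im, Complex.im_ofReal_mul,
    Complex.I_im, mul_one, zero_add]

theorem abs_gfun_re_le (ht : 0 < t) : |(gfun φ t).re| ≤ |cos φ| * (t / 2) * exp t := by
  have hcosh : 0 ≤ cosh t - 1 := sub_nonneg.2 (one_le_cosh t)
  rw [gfun_re φ ht.ne', abs_div, abs_mul, abs_of_nonneg hcosh, abs_of_pos ht, div_le_iff₀ ht]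
  calc |cos φ| * (cosh t - 1) ≤ |cos φ| * (t ^ 2 / 2 * exp t) := by
        gcongr; exact cosh_sub_one_le ht.le
    _ = |cos φ| * (t / 2) * exp t * t := by ring

theorem abs_gfun_im_le (ht : 0 < t) : |(gfun φ t).im| ≤ |sin φ| * exp t := by
  rw [gfun_im φ ht.ne', abs_div, abs_mul, abs_of_pos (sinh_pos_iff.2 ht), abs_of_pos ht,
    div_le_iff₀ ht, mul_assoc]
  gcongr
  linarith [sinh_le_mul_exp ht.le]

theorem norm_gfun_sub_gfun_zero_le (ht : 0 < t) :
    ‖gfun φ t - gfun φ 0‖ ≤ (|cos φ| + |sin φ| * t) * (t / 2) * exp t := by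
  have him : (gfun φ t - gfun φ 0).im = sin φ * ((sinh t - t) / t) := by
    rw [Complex.sub_im, gfun_im φ ht.ne', gfun_zero, Complex.I_mul_im, Complex.ofReal_re]
    field_simp
  have hsinh : (sinh t - t) / t ≤ t ^ 2 / 2 * exp t := by
    rw [div_le_iff₀ ht]
    nlinarith [sinh_le_mul_cosh ht.le, cosh_sub_one_le ht.le]
  have him_le : |(gfun φ t - gfun φ 0).im| ≤ |sin φ| * t * (t / 2) * exp t := by
    rw [him, abs_mul, abs_of_nonneg (div_nonneg (by linarith [self_le_sinh_iff.2 ht.le]) ht.le)]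
    calc |sin φ| * ((sinh t - t) / t) ≤ |sin φ| * (t ^ 2 / 2 * exp t) := by gcongr
      _ = |sin φ| * t * (t / 2) * exp t := by ring
  have hre : (gfun φ t - gfun φ 0).re = (gfun φ t).re := by simp [gfun_zero]
  calc ‖gfun φ t - gfun φ 0‖ ≤ |(gfun φ t - gfun φ 0).re| + |(gfun φ t - gfun φ 0).im| :=
        Complex.norm_le_abs_re_add_abs_im _
    _ ≤ |cos φ| * (t / 2) * exp t + |sin φ| * t * (t / 2) * exp t :=
        add_le_add (hre ▸ abs_gfun_re_le φ ht) him_le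
    _ = _ := by ring

end Estimates

theorem abs_cos_eq_sin_mul_abs_cot {φ : ℝ} (hs : 0 < sin φ) :
    |cos φ| = sin φ * |cos φ / sin φ| := by
  rw [abs_div, abs_of_pos hs, mul_div_cancel₀ _ hs.ne']

section SinPos

variable {φ t : ℝ} (hs : 0 < sin φ) (ht : 0 < t)
include hs ht

theorem norm_gfun_sub_gfun_zero_div_le :
    ‖gfun φ t - gfun φ 0‖ / t ≤ sin φ * ((|cos φ / sin φ| + t) / 2) * exp t := by
  have h := norm_gfun_sub_gfun_zero_le φ ht
  rw [abs_cos_eq_sin_mul_abs_cot hs, abs_of_pos hs] at h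
  rw [div_le_iff₀ ht]
  linarith

theorem max_norm_gfun_rpow_le {p : ℝ} (hp : 0 ≤ p) :
    max ‖gfun φ t‖ ‖gfun φ 0‖ ^ p ≤
      2 ^ (p / 2) * sin φ ^ p * (1 + |cos φ / sin φ| ^ p / 2 ^ p * t ^ p * exp (p * t)) *
        exp (p * t) := by
  set q := |cos φ / sin φ|
  set a := q ^ p / 2 ^ p * t ^ p
  have hexp : exp t ^ p = exp (p * t) := by rw [← exp_mul, mul_comm]
  have hE : 1 ≤ exp (p * t) := one_le_exp (by positivity)
  have h2 : (1 : ℝ) ≤ 2 ^ (p / 2) := one_le_rpow one_le_two (by positivity)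
  have ha : 0 ≤ a := by positivity
  rw [rpow_max (norm_nonneg _) (norm_nonneg _) hp]
  refine max_le ?_ ?_
  · calc ‖gfun φ t‖ ^ p ≤ 2 ^ (p / 2) * (|(gfun φ t).re| ^ p + |(gfun φ t).im| ^ p) :=
          Complex.norm_rpow_le_two_rpow_half_mul _ hp
      _ ≤ 2 ^ (p / 2) * ((sin φ * q * (t / 2) * exp t) ^ p + (sin φ * exp t) ^ p) := by
          have hre := abs_gfun_re_le φ ht
          have him := abs_gfun_im_le φ ht
          rw [abs_cos_eq_sin_mul_abs_cot hs] at hre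
          rw [abs_of_pos hs] at him
          gcongr
      _ = 2 ^ (p / 2) * sin φ ^ p * (1 + a) * exp (p * t) := by
          rw [mul_rpow (by positivity) (exp_pos t).le, mul_rpow (by positivity) (by positivity),
            mul_rpow hs.le (abs_nonneg _), div_rpow ht.le zero_le_two,
            mul_rpow hs.le (exp_pos t).le, hexp]
          ring
      _ ≤ 2 ^ (p / 2) * sin φ ^ p * (1 + a * exp (p * t)) * exp (p * t) := by
          gcongr
          exact le_mul_of_one_le_right ha hE
  · calc ‖gfun φ 0‖ ^ p = 1 * sin φ ^ p * 1 * 1 := by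
          rw [gfun_zero, norm_mul, Complex.norm_I, one_mul, Complex.norm_real,
            norm_of_nonneg hs.le, one_mul, mul_one, mul_one]
      _ ≤ 2 ^ (p / 2) * sin φ ^ p * (1 + a * exp (p * t)) * exp (p * t) := by
          gcongr
          linarith [mul_nonneg ha (zero_le_one.trans hE)]

theorem norm_ffun_le_mul_max_rpow {lam : ℝ} (hlam : 2 ≤ lam) :
    ‖ffun lam φ t‖ ≤
      (lam - 1) * max ‖gfun φ t‖ ‖gfun φ 0‖ ^ (lam - 2) * (‖gfun φ t - gfun φ 0‖ / t) := by
  have hz : 0 < (gfun φ t).im := by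
    rw [gfun_im φ ht.ne']
    exact div_pos (mul_pos hs (sinh_pos_iff.2 ht)) ht
  have hw : 0 < (gfun φ 0).im := by rwa [gfun_zero, Complex.I_mul_im, Complex.ofReal_re]
  have hmvt := Complex.norm_cpow_sub_cpow_le hz hw (c := lam - 1) (by linarith)
  rw [show lam - 1 - 1 = lam - 2 by ring] at hmvt
  rw [ffun, norm_div, Complex.norm_real, norm_of_nonneg ht.le, ← mul_div_assoc]
  push_cast at hmvt
  gcongr

end SinPos

theorem ffun_bound_large_lambda (lam : ℝ) (hlam : 2 < lam)
    (φ t : ℝ) (hφ : φ ∈ Set.Ioo 0 π) (ht : 0 < t) :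
    ‖ffun lam φ t‖ ≤
      2 ^ (lam / 2) * (lam - 1) * Real.sin φ ^ (lam - 1) *
        (|Real.cos φ / Real.sin φ| + 2 * t / 3) *
        (1 + |Real.cos φ / Real.sin φ| ^ (lam - 2) / 2 ^ (lam - 2) *
          t ^ (lam - 2) * Real.exp ((lam - 2) * t)) *
        Real.exp ((lam - 1) * t) := by
  have hs : 0 < sin φ := sin_pos_of_pos_of_lt_pi hφ.1 hφ.2
  have hM := max_norm_gfun_rpow_le hs ht (p := lam - 2) (by linarith)
  have hD : ‖gfun φ t - gfun φ 0‖ / t ≤ sin φ * (2 * (|cos φ / sin φ| + 2 * t / 3)) * exp t :=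
    (norm_gfun_sub_gfun_zero_div_le hs ht).trans (by gcongr; linarith [abs_nonneg (cos φ / sin φ)])
  have hK := (rpow_nonneg (le_max_of_le_left (norm_nonneg _)) _).trans hM
  have h2 : (2 : ℝ) ^ (lam / 2) = 2 ^ ((lam - 2) / 2) * 2 := by
    rw [← rpow_add_one two_ne_zero]; ring_nf
  have hsin : sin φ ^ (lam - 1) = sin φ ^ (lam - 2) * sin φ := by
    rw [← rpow_add_one hs.ne']; ring_nf
  have hexp : exp ((lam - 1) * t) = exp ((lam - 2) * t) * exp t := by
    rw [← exp_add]; ring_nf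
  calc ‖ffun lam φ t‖
      ≤ (lam - 1) * max ‖gfun φ t‖ ‖gfun φ 0‖ ^ (lam - 2) * (‖gfun φ t - gfun φ 0‖ / t) :=
        norm_ffun_le_mul_max_rpow hs ht hlam.le
    _ ≤ _ := mul_le_mul (mul_le_mul_of_nonneg_left hM (by linarith)) hD
        (div_nonneg (norm_nonneg _) ht.le) (mul_nonneg (by linarith) hK)
    _ = _ := by
        rw [h2, hsin, hexp]
        ring
end

section
/- Let λ > −1/2 be real and let ν ≥ 2 be real. Then for every x ∈ (−1,1], ʳG_ν^{(λ)}(x) = x · ʳG_{ν−1}^{(λ+1)}(x) − ((ν−1)(ν+2λ+1))/(4(λ+1/2)(λ+3/2)) · (1−x²) · ʳG_{ν−2}^{(λ+2)}(x). -/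
open Real

/-- Pochhammer symbol `(a)_n = a (a+1) ⋯ (a+n-1)` for a real base. -/
noncomputable def poch (a : ℝ) (n : ℕ) : ℝ := ∏ i ∈ Finset.range n, (a + (i : ℝ))

/-- The right generalized Gegenbauer function of fractional degree. -/
noncomputable def rG (lam nu x : ℝ) : ℝ :=
  ∑' j : ℕ, (poch (-nu) j * poch (nu + 2 * lam) j /
    ((j.factorial : ℝ) * poch (lam + 1 / 2) j)) * ((1 - x) / 2) ^ j

/-!
With `t = (1 - x) / 2`, `ʳG_ν^{(λ)}(x)` is the Gauss series `₂F₁(-ν, ν + 2λ; λ + 1/2; t)`, whose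
parameters satisfy `a + b + 1 = 2c`, while `x = 1 - 2t` and `1 - x² = 4t(1 - t)`. The recurrence
becomes a relation between `₂F₁(a, b; c)`, `₂F₁(a+1, b+1; c+1)` and `₂F₁(a+2, b+2; c+2)`, which is
checked coefficientwise: the coefficients of all three series are rational multiples of those of
the last one, and the resulting rational identity holds precisely because `a + b + 1 = 2c`.
All series converge for `|t| < 1` by the ratio test.
-/

open Filter Topology

lemma poch_succ (a : ℝ) (n : ℕ) : poch a (n + 1) = poch a n * (a + n) :=
  Finset.prod_range_succ _ _

lemma poch_succ' (a : ℝ) (n : ℕ) : poch a (n + 1) = a * poch (a + 1) n := by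
  simp only [poch, Finset.prod_range_succ', Nat.cast_add, Nat.cast_one, Nat.cast_zero, add_zero]
  rw [mul_comm]
  congr 1
  exact Finset.prod_congr rfl fun i _ => by ring

noncomputable def hypergeomCoeff (a b c : ℝ) (n : ℕ) : ℝ :=
  poch a n * poch b n / ((n.factorial : ℝ) * poch c n)

noncomputable def hypergeomSeries (a b c t : ℝ) : ℝ :=
  ∑' n : ℕ, hypergeomCoeff a b c n * t ^ n

lemma rG_eq_hypergeomSeries (lam nu x : ℝ) :
    rG lam nu x = hypergeomSeries (-nu) (nu + 2 * lam) (lam + 1 / 2) ((1 - x) / 2) := rfl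

section

variable (a b c : ℝ)

@[simp]
lemma hypergeomCoeff_zero : hypergeomCoeff a b c 0 = 1 := by
  simp [hypergeomCoeff, poch]

lemma hypergeomCoeff_succ (n : ℕ) :
    hypergeomCoeff a b c (n + 1) =
      hypergeomCoeff a b c n * ((a + n) * (b + n) / ((n + 1) * (c + n))) := by
  simp only [hypergeomCoeff, poch_succ, Nat.factorial_succ, Nat.cast_mul, Nat.cast_succ,
    div_eq_mul_inv, mul_inv]
  ring

lemma hypergeomCoeff_succ' (n : ℕ) :
    hypergeomCoeff a b c (n + 1) =
      a * b / (c * (n + 1)) * hypergeomCoeff (a + 1) (b + 1) (c + 1) n := by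
  simp only [hypergeomCoeff, poch_succ', Nat.factorial_succ, Nat.cast_mul, Nat.cast_succ,
    div_eq_mul_inv, mul_inv]
  ring

lemma hypergeomCoeff_one : hypergeomCoeff a b c 1 = a * b / c := by
  simp [hypergeomCoeff_succ' a b c 0]

lemma tendsto_hypergeomCoeff_ratio :
    Tendsto (fun n : ℕ => (a + n) * (b + n) / ((n + 1) * (c + n))) atTop (𝓝 1) := by
  have h := (tendsto_add_mul_div_add_mul_atTop_nhds a 1 1 one_ne_zero).mul
    (tendsto_add_mul_div_add_mul_atTop_nhds b c 1 one_ne_zero)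
  simp only [one_mul, div_one] at h
  refine h.congr fun n => ?_
  rw [mul_div_mul_comm, add_comm (n : ℝ) 1]

lemma summable_hypergeomCoeff_mul_pow {t : ℝ} (ht : |t| < 1) :
    Summable fun n => hypergeomCoeff a b c n * t ^ n := by
  obtain ⟨r, htr, hr⟩ := exists_between ht
  refine summable_of_ratio_norm_eventually_le hr ?_
  have hlim : Tendsto (fun n : ℕ => |t * ((a + n) * (b + n) / ((n + 1) * (c + n)))|) atTop
      (𝓝 |t|) := by
    simpa using ((tendsto_hypergeomCoeff_ratio a b c).const_mul t).abs
  filter_upwards [hlim.eventually_lt_const htr] with n hn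
  calc ‖hypergeomCoeff a b c (n + 1) * t ^ (n + 1)‖
      = ‖hypergeomCoeff a b c n * t ^ n‖ * |t * ((a + n) * (b + n) / ((n + 1) * (c + n)))| := by
        rw [hypergeomCoeff_succ, ← Real.norm_eq_abs, ← norm_mul]; ring_nf
    _ ≤ r * ‖hypergeomCoeff a b c n * t ^ n‖ := by
        rw [mul_comm r]; exact mul_le_mul_of_nonneg_left hn.le (norm_nonneg _)

lemma hasSum_hypergeomSeries {t : ℝ} (ht : |t| < 1) :
    HasSum (fun n => hypergeomCoeff a b c n * t ^ n) (hypergeomSeries a b c t) :=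
  (summable_hypergeomCoeff_mul_pow a b c ht).hasSum

end

section

variable {a b c : ℝ}

lemma hypergeomCoeff_contiguous (habc : a + b + 1 = 2 * c) (hc : 0 < c) (n : ℕ) :
    hypergeomCoeff a b c (n + 2) =
      hypergeomCoeff (a + 1) (b + 1) (c + 1) (n + 2)
        - 2 * hypergeomCoeff (a + 1) (b + 1) (c + 1) (n + 1)
        + (a + 1) * (b + 1) / (c * (c + 1)) *
          (hypergeomCoeff (a + 2) (b + 2) (c + 2) (n + 1)
            - hypergeomCoeff (a + 2) (b + 2) (c + 2) n) := by
  have hshift (m : ℕ) : hypergeomCoeff (a + 1) (b + 1) (c + 1) (m + 1) =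
      (a + 1) * (b + 1) / ((c + 1) * (m + 1)) * hypergeomCoeff (a + 2) (b + 2) (c + 2) m := by
    rw [hypergeomCoeff_succ']; ring_nf
  rw [hypergeomCoeff_succ', hshift, hshift, hypergeomCoeff_succ (a + 2)]
  obtain rfl : b = 2 * c - 1 - a := by linarith
  have : c + 2 + n ≠ 0 := by positivity
  field_simp
  push_cast
  ring

theorem hypergeomSeries_contiguous {t : ℝ} (habc : a + b + 1 = 2 * c) (hc : 0 < c)
    (ht : |t| < 1) :
    hypergeomSeries a b c t =
      (1 - 2 * t) * hypergeomSeries (a + 1) (b + 1) (c + 1) t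
        + (a + 1) * (b + 1) / (c * (c + 1)) * (t * (1 - t)) *
          hypergeomSeries (a + 2) (b + 2) (c + 2) t := by
  set k := (a + 1) * (b + 1) / (c * (c + 1))
  have hB := hasSum_hypergeomSeries (a + 1) (b + 1) (c + 1) ht
  have hE := hasSum_hypergeomSeries (a + 2) (b + 2) (c + 2) ht
  -- the coefficient identity only holds from degree 2 on, so compare the tails from there
  have hRHS := (((hasSum_nat_add_iff' 2).mpr hB).sub
      (((hasSum_nat_add_iff' 1).mpr hB).mul_left (2 * t))).add
    ((((hasSum_nat_add_iff' 1).mpr hE).mul_left (k * t)).sub (hE.mul_left (k * t ^ 2)))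
  have hsum := ((hasSum_nat_add_iff' 2).mpr (hasSum_hypergeomSeries a b c ht)).unique <|
    hRHS.congr_fun fun n => by
      rw [hypergeomCoeff_contiguous habc hc n]
      ring
  have hlow : hypergeomCoeff a b c 1 = hypergeomCoeff (a + 1) (b + 1) (c + 1) 1 - 2 + k := by
    simp only [k, hypergeomCoeff_one]
    have : c + 1 ≠ 0 := by positivity
    field_simp
    linear_combination -(c + 1) * habc
  simp only [Finset.sum_range_succ, Finset.sum_range_zero, hypergeomCoeff_zero, pow_zero,
    pow_one, zero_add, mul_one] at hsum
  linear_combination hsum + t * hlow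

end

theorem ggf_parameter_recurrence_general (lam nu : ℝ) (hlam : -(1 / 2) < lam)
    (x : ℝ) (hx : x ∈ Set.Ioc (-1 : ℝ) 1) :
    rG lam nu x =
      x * rG (lam + 1) (nu - 1) x -
        (nu - 1) * (nu + 2 * lam + 1) / (4 * (lam + 1 / 2) * (lam + 3 / 2)) *
          (1 - x ^ 2) * rG (lam + 2) (nu - 2) x := by
  have ht : |(1 - x) / 2| < 1 := abs_lt.mpr ⟨by linarith [hx.2], by linarith [hx.1]⟩
  rw [rG_eq_hypergeomSeries, rG_eq_hypergeomSeries, rG_eq_hypergeomSeries,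
    hypergeomSeries_contiguous (by ring) (by linarith) ht,
    show -(nu - 1) = -nu + 1 by ring, show nu - 1 + 2 * (lam + 1) = nu + 2 * lam + 1 by ring,
    show lam + 1 + 1 / 2 = lam + 1 / 2 + 1 by ring, show -(nu - 2) = -nu + 2 by ring,
    show nu - 2 + 2 * (lam + 2) = nu + 2 * lam + 2 by ring,
    show lam + 2 + 1 / 2 = lam + 1 / 2 + 2 by ring]
  have : lam + 1 / 2 ≠ 0 := by linarith
  have : lam + 3 / 2 ≠ 0 := by linarith
  field_simp
  ring

/-- Recurrence relating GGF-Fs with parameters `λ`, `λ+1` and `λ+2`. -/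
theorem ggf_parameter_recurrence (lam nu : ℝ) (hlam : -(1 / 2) < lam) (hnu : 2 ≤ nu)
    (x : ℝ) (hx : x ∈ Set.Ioc (-1 : ℝ) 1) :
    rG lam nu x =
      x * rG (lam + 1) (nu - 1) x -
        (nu - 1) * (nu + 2 * lam + 1) / (4 * (lam + 1 / 2) * (lam + 3 / 2)) *
          (1 - x ^ 2) * rG (lam + 2) (nu - 2) x :=
  ggf_parameter_recurrence_general lam nu hlam x hx
end
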